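/- Let θ : [0,∞) → (0,1) be continuous, decreasing and integrable, and set Θ = exp(−∫₀^∞ θ(s) ds) > 0. Let u₀ ∈ C(ℝ) be compactly supported with 0 ≤ u₀ ≤ 1, u₀ ≢ 0, and let w(t,·) = Γ(t,·) * u₀ be the solution of the heat equation with initial data u₀, where Γ(t,x) = (4πt)^{−1/2} e^{−x²/(4t)}. Let χ : ℝ → ℝ be a smooth cut-off with 0 ≤ χ ≤ 1, χ(x) = 1 for |x| ≤ 1/2 and χ(x) = 0 for |x| ≥ 1. Then there exists t₀ > 0 such that the function v₀(x) := Θ χ(x/√t₀) w(t₀,x), which belongs to H¹₀(−√t₀, √t₀), satisfies E_{√t₀, θ(t₀)}(v₀) < 0, where E_{R,θ}(φ) = (1/2)∫_{−R}^{R} |φ'(x)|² dx − ∫_{−R}^{R} F(θ,φ(x)) dx and F(θ,v) = −v⁴/4 + (1+θ)v³/3 − θv²/2. -/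

import Mathlib

set_option maxHeartbeats 1000000
open MeasureTheory Set



/-- The one-dimensional heat kernel `Γ(t,x) = (4πt)^{−1/2} e^{−x²/(4t)}`. -/
noncomputable def heatKernel (t x : ℝ) : ℝ :=
  (Real.sqrt (4 * Real.pi * t))⁻¹ * Real.exp (-(x ^ 2) / (4 * t))

/-- The solution `w(t,·) = Γ(t,·) * u₀` of the heat equation with data `u₀`. -/
noncomputable def heatConv (u₀ : ℝ → ℝ) (t x : ℝ) : ℝ :=
  ∫ y, heatKernel t (x - y) * u₀ y

/-- The antiderivative `F(θ,v) = −v⁴/4 + (1+θ)v³/3 − θv²/2` of the bistable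
nonlinearity `f(θ,u) = u(u−θ)(1−u)`. -/
noncomputable def Fpot (θ v : ℝ) : ℝ := -v ^ 4 / 4 + (1 + θ) * v ^ 3 / 3 - θ * v ^ 2 / 2

/-- The energy functional `E_{R,θ}(φ) = (1/2)∫_{−R}^R |φ'|² − ∫_{−R}^R F(θ,φ)`. -/
noncomputable def energy (R θ : ℝ) (φ : ℝ → ℝ) : ℝ :=
  (1 / 2) * ∫ x in Set.Ioo (-R) R, (deriv φ x) ^ 2
    - ∫ x in Set.Ioo (-R) R, Fpot θ (φ x)


lemma exists_small_sqrt_theta (θ : ℝ → ℝ) (hθ_int : MeasureTheory.IntegrableOn θ (Set.Ici 0))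
    (ε T : ℝ) (hε : 0 < ε) (hT : 0 < T) :
    ∃ t ≥ T, Real.sqrt t * θ t < ε := by
  by_contra h
  push_neg at h
  have hsub : Set.Ioi T ⊆ Set.Ici (0:ℝ) := fun x hx => le_of_lt (hT.trans hx)
  have hmono : MeasureTheory.IntegrableOn θ (Set.Ioi T) := hθ_int.mono_set hsub
  have hint : MeasureTheory.IntegrableOn (fun x : ℝ => x ^ (-(1/2) : ℝ)) (Set.Ioi T) := by
    have hcm : MeasureTheory.IntegrableOn (fun x => ε⁻¹ * θ x) (Set.Ioi T) :=
      hmono.const_mul ε⁻¹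
    refine hcm.mono' ?_ ?_
    · exact (Measurable.aestronglyMeasurable (by measurability))
    · filter_upwards [MeasureTheory.ae_restrict_mem measurableSet_Ioi] with x hx
      have hx0 : 0 < x := hT.trans hx
      have h1 : ε ≤ Real.sqrt x * θ x := h x (le_of_lt hx)
      have hrp : x ^ (-(1/2) : ℝ) = (Real.sqrt x)⁻¹ := by
        rw [Real.rpow_neg hx0.le, Real.sqrt_eq_rpow]
      have hs : 0 < Real.sqrt x := Real.sqrt_pos.2 hx0
      rw [Real.norm_eq_abs, hrp, abs_of_nonneg (by positivity)]
      have h2 : (Real.sqrt x)⁻¹ * ε ≤ (Real.sqrt x)⁻¹ * (Real.sqrt x * θ x) :=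
        mul_le_mul_of_nonneg_left h1 (by positivity)
      rw [← mul_assoc, inv_mul_cancel₀ hs.ne', one_mul] at h2
      calc (Real.sqrt x)⁻¹ = ε⁻¹ * ((Real.sqrt x)⁻¹ * ε) := by field_simp
        _ ≤ ε⁻¹ * θ x := mul_le_mul_of_nonneg_left h2 (by positivity)
  have := (integrableOn_Ioi_rpow_iff hT).1 hint
  norm_num at this

lemma sqrtS_pos {t : ℝ} (ht : 0 < t) : 0 < Real.sqrt (4 * Real.pi * t) :=
  Real.sqrt_pos.2 (by positivity)

lemma heatKernel_pos {t x : ℝ} (ht : 0 < t) : 0 < heatKernel t x := by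
  have := sqrtS_pos ht
  unfold heatKernel; positivity

lemma heatKernel_le {t x : ℝ} (ht : 0 < t) :
    heatKernel t x ≤ (Real.sqrt (4 * Real.pi * t))⁻¹ := by
  have hS := sqrtS_pos ht
  unfold heatKernel
  nth_rewrite 2 [← mul_one (Real.sqrt (4 * Real.pi * t))⁻¹]
  refine mul_le_mul_of_nonneg_left ?_ (by positivity)
  have h0 : (0:ℝ) ≤ x ^ 2 / (4 * t) := by positivity
  exact Real.exp_le_one_iff.2 (by rw [neg_div]; linarith)

lemma heatKernel_ge {t x : ℝ} (ht : 0 < t) (hx : x ^ 2 ≤ 4 * t) :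
    (Real.sqrt (4 * Real.pi * t))⁻¹ * Real.exp (-1) ≤ heatKernel t x := by
  have hS := sqrtS_pos ht
  unfold heatKernel
  refine mul_le_mul_of_nonneg_left ?_ (by positivity)
  refine Real.exp_le_exp.2 ?_
  rw [neg_div, neg_le_neg_iff, div_le_one (by positivity)]
  exact hx

lemma abs_mul_exp_le {t : ℝ} (ht : 0 < t) (z : ℝ) :
    |z| * Real.exp (-(z ^ 2) / (4 * t)) ≤ Real.sqrt (2 * t) := by
  have h1 : z ^ 2 * Real.exp (-(z ^ 2) / (2 * t)) ≤ 2 * t := by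
    have h2 : z ^ 2 / (2 * t) ≤ Real.exp (z ^ 2 / (2 * t)) := by
      have := Real.add_one_le_exp (z ^ 2 / (2 * t) - 1)
      have h3 : Real.exp (z ^ 2 / (2 * t) - 1) ≤ Real.exp (z ^ 2 / (2 * t)) :=
        Real.exp_le_exp.2 (by linarith)
      linarith
    have h4 : z ^ 2 ≤ 2 * t * Real.exp (z ^ 2 / (2 * t)) := by
      rw [div_le_iff₀ (by positivity)] at h2
      linarith [h2]
    have h5 : 0 < Real.exp (-(z ^ 2) / (2 * t)) := Real.exp_pos _
    calc z ^ 2 * Real.exp (-(z ^ 2) / (2 * t))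
        ≤ (2 * t * Real.exp (z ^ 2 / (2 * t))) * Real.exp (-(z ^ 2) / (2 * t)) :=
          mul_le_mul_of_nonneg_right h4 h5.le
      _ = 2 * t := by
          rw [mul_assoc, ← Real.exp_add]
          ring_nf
          rw [Real.exp_zero]
          ring
  have hsq : (|z| * Real.exp (-(z ^ 2) / (4 * t))) ^ 2 = z ^ 2 * Real.exp (-(z ^ 2) / (2 * t)) := by
    rw [mul_pow, sq_abs, ← Real.exp_nat_mul]
    ring_nf
  have hnn : 0 ≤ |z| * Real.exp (-(z ^ 2) / (4 * t)) := by positivity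
  have := Real.sqrt_le_sqrt (hsq ▸ h1 : (|z| * Real.exp (-(z ^ 2) / (4 * t))) ^ 2 ≤ 2 * t)
  rwa [Real.sqrt_sq hnn] at this

section Conv
variable {u₀ : ℝ → ℝ} (hc : Continuous u₀) (hs : HasCompactSupport u₀)
  (hnn : ∀ y, 0 ≤ u₀ y) {t : ℝ} (ht : 0 < t)

lemma heatKernel_continuous (x : ℝ) : Continuous (fun y => heatKernel t (x - y)) := by
  unfold heatKernel
  fun_prop

include hc hs ht in
lemma heat_integrand_integrable (x : ℝ) :
    MeasureTheory.Integrable (fun y => heatKernel t (x - y) * u₀ y) := by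
  refine Continuous.integrable_of_hasCompactSupport ?_ (hs.mul_left)
  exact (heatKernel_continuous x).mul hc

include hc hs hnn ht in
lemma heatConv_nonneg (x : ℝ) : 0 ≤ heatConv u₀ t x :=
  integral_nonneg fun y => mul_nonneg (heatKernel_pos ht).le (hnn y)

include hc hs hnn ht in
lemma heatConv_le (x : ℝ) :
    heatConv u₀ t x ≤ (Real.sqrt (4 * Real.pi * t))⁻¹ * ∫ y, u₀ y := by
  rw [heatConv, ← integral_const_mul]
  refine integral_mono (heat_integrand_integrable hc hs ht x)
    ((hc.integrable_of_hasCompactSupport hs).const_mul _) fun y => ?_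
  exact mul_le_mul_of_nonneg_right (heatKernel_le ht) (hnn y)

include hc hs hnn ht in
lemma heatConv_ge {L x : ℝ} (hL : ∀ y, u₀ y ≠ 0 → |y| ≤ L)
    (hLt : L ≤ Real.sqrt t) (hx : |x| ≤ Real.sqrt t) :
    (Real.sqrt (4 * Real.pi * t))⁻¹ * Real.exp (-1) * ∫ y, u₀ y ≤ heatConv u₀ t x := by
  rw [heatConv, ← integral_const_mul]
  refine integral_mono ((hc.integrable_of_hasCompactSupport hs).const_mul _)
    (heat_integrand_integrable hc hs ht x) fun y => ?_
  by_cases hy : u₀ y = 0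
  · simp [hy]
  · refine mul_le_mul_of_nonneg_right ?_ (hnn y)
    refine heatKernel_ge ht ?_
    have h1 : |x - y| ≤ 2 * Real.sqrt t := by
      calc |x - y| ≤ |x| + |y| := abs_sub _ _
        _ ≤ Real.sqrt t + L := add_le_add hx (hL y hy)
        _ ≤ 2 * Real.sqrt t := by linarith
    have h2 : (x - y) ^ 2 ≤ (2 * Real.sqrt t) ^ 2 := by
      rw [← sq_abs]
      exact pow_le_pow_left₀ (abs_nonneg _) h1 2
    calc (x - y) ^ 2 ≤ (2 * Real.sqrt t) ^ 2 := h2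
      _ = 4 * (Real.sqrt t ^ 2) := by ring
      _ = 4 * t := by rw [Real.sq_sqrt ht.le]

include hc hs hnn ht in
lemma heatConv_hasDerivAt (x : ℝ) :
    ∃ d : ℝ, HasDerivAt (heatConv u₀ t) d x ∧
      |d| ≤ (Real.sqrt (4 * Real.pi * t))⁻¹ * Real.sqrt (2 * t) / (2 * t) * ∫ y, u₀ y := by
  have hS := sqrtS_pos ht
  set K : ℝ := (Real.sqrt (4 * Real.pi * t))⁻¹ * Real.sqrt (2 * t) / (2 * t) with hK
  have hbound_int : MeasureTheory.Integrable (fun y => K * u₀ y) :=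
    (hc.integrable_of_hasCompactSupport hs).const_mul K
  have hbd : ∀ (x' y : ℝ),
      ‖(-(x' - y) / (2 * t)) * heatKernel t (x' - y) * u₀ y‖ ≤ K * u₀ y := by
    intro x' y
    rw [Real.norm_eq_abs, abs_mul, abs_mul, abs_of_nonneg (hnn y), abs_div, abs_neg,
      abs_of_pos (by linarith : (0:ℝ) < 2 * t), abs_of_pos (heatKernel_pos ht)]
    unfold heatKernel
    calc |x' - y| / (2 * t) * ((Real.sqrt (4 * Real.pi * t))⁻¹
            * Real.exp (-((x' - y) ^ 2) / (4 * t))) * u₀ y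
        = (|x' - y| * Real.exp (-((x' - y) ^ 2) / (4 * t)))
            * ((Real.sqrt (4 * Real.pi * t))⁻¹ / (2 * t) * u₀ y) := by ring
      _ ≤ Real.sqrt (2 * t) * ((Real.sqrt (4 * Real.pi * t))⁻¹ / (2 * t) * u₀ y) :=
          mul_le_mul_of_nonneg_right (abs_mul_exp_le ht _) (mul_nonneg (by positivity) (hnn y))
      _ = K * u₀ y := by rw [hK]; ring
  have hdiff : ∀ (y x' : ℝ), HasDerivAt (fun x'' => heatKernel t (x'' - y) * u₀ y)
      ((-(x' - y) / (2 * t)) * heatKernel t (x' - y) * u₀ y) x' := by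
    intro y x'
    have h0 : HasDerivAt (fun x'' : ℝ => x'' - y) 1 x' := (hasDerivAt_id x').sub_const y
    have h1 : HasDerivAt (fun x'' : ℝ => (x'' - y) ^ 2) (2 * (x' - y)) x' := by
      simpa using h0.fun_pow 2
    have h2 : HasDerivAt (fun x'' : ℝ => -((x'' - y) ^ 2) / (4 * t))
        (-(2 * (x' - y)) / (4 * t)) x' := (h1.neg).div_const (4 * t)
    have h3 := (h2.exp.const_mul ((Real.sqrt (4 * Real.pi * t))⁻¹)).mul_const (u₀ y)
    have heq : (fun x'' => heatKernel t (x'' - y) * u₀ y)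
        = fun x'' => (Real.sqrt (4 * Real.pi * t))⁻¹
            * Real.exp (-((x'' - y) ^ 2) / (4 * t)) * u₀ y := by
      funext x''; unfold heatKernel; ring
    rw [heq]
    refine h3.congr_deriv ?_
    unfold heatKernel
    field_simp
    ring
  have key := hasDerivAt_integral_of_dominated_loc_of_deriv_le (μ := volume)
    (F := fun x y => heatKernel t (x - y) * u₀ y)
    (F' := fun x y => (-(x - y) / (2 * t)) * heatKernel t (x - y) * u₀ y)
    (x₀ := x) (bound := fun y => K * u₀ y) (Metric.ball_mem_nhds x zero_lt_one)
    (Filter.Eventually.of_forall fun x' =>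
      ((heatKernel_continuous x').mul hc).aestronglyMeasurable)
    (heat_integrand_integrable hc hs ht x)
    (((((continuous_const.sub continuous_id).neg.div_const (2 * t)).mul
        (heatKernel_continuous x)).mul hc).aestronglyMeasurable)
    (Filter.Eventually.of_forall fun y x' _ => hbd x' y)
    hbound_int
    (Filter.Eventually.of_forall fun y x' _ => hdiff y x')
  obtain ⟨hint, hder⟩ := key
  refine ⟨_, hder, ?_⟩
  have hnorm : ‖∫ y, (-(x - y) / (2 * t)) * heatKernel t (x - y) * u₀ y‖
      ≤ ∫ y, K * u₀ y :=
    norm_integral_le_of_norm_le hbound_int (Filter.Eventually.of_forall fun y => hbd x y)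
  rw [integral_const_mul] at hnorm
  rw [← Real.norm_eq_abs]
  exact hnorm

end Conv

/-- **Claim 1.** Let `θ : [0,∞) → (0,1)` be continuous, decreasing, integrable,
`Θ = exp(−∫₀^∞ θ)`, `u₀` compactly supported continuous with `0 ≤ u₀ ≤ 1`,
`u₀ ≢ 0`, `w` the heat semigroup applied to `u₀` and `χ` a smooth cut-off.
Then there exists `t₀ > 0` such that `v₀(x) = Θ χ(x/√t₀) w(t₀,x)` belongs to
`H¹₀(−√t₀,√t₀)` (it vanishes outside `(−√t₀,√t₀)`) and has negative energy
`E_{√t₀,θ(t₀)}(v₀) < 0`. -/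
theorem negative_energy_time_exists
    (θ : ℝ → ℝ)
    (hθ_mem : ∀ t ≥ (0 : ℝ), θ t ∈ Set.Ioo (0 : ℝ) 1)
    (hθ_cont : ContinuousOn θ (Set.Ici 0))
    (hθ_anti : AntitoneOn θ (Set.Ici 0))
    (hθ_int : MeasureTheory.IntegrableOn θ (Set.Ici 0))
    (u₀ : ℝ → ℝ) (hu₀_cont : Continuous u₀) (hu₀_supp : HasCompactSupport u₀)
    (hu₀_mem : ∀ x, 0 ≤ u₀ x ∧ u₀ x ≤ 1) (hu₀_ne : ∃ x, u₀ x ≠ 0)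
    (χ : ℝ → ℝ) (hχ_smooth : ContDiff ℝ (⊤ : ℕ∞) χ)
    (hχ_mem : ∀ x, 0 ≤ χ x ∧ χ x ≤ 1)
    (hχ_one : ∀ x : ℝ, |x| ≤ 1 / 2 → χ x = 1)
    (hχ_zero : ∀ x : ℝ, 1 ≤ |x| → χ x = 0) :
    ∃ t₀ > (0 : ℝ),
      (∀ x, x ∉ Set.Ioo (-Real.sqrt t₀) (Real.sqrt t₀) →
        Real.exp (-∫ s in Set.Ioi (0 : ℝ), θ s) * χ (x / Real.sqrt t₀)
          * heatConv u₀ t₀ x = 0) ∧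
      energy (Real.sqrt t₀) (θ t₀)
        (fun x => Real.exp (-∫ s in Set.Ioi (0 : ℝ), θ s) * χ (x / Real.sqrt t₀)
          * heatConv u₀ t₀ x) < 0 := by
  have hu_nn : ∀ y, 0 ≤ u₀ y := fun y => (hu₀_mem y).1
  -- Θ
  set Θ : ℝ := Real.exp (-∫ s in Set.Ioi (0 : ℝ), θ s) with hΘdef
  have hΘ0 : 0 < Θ := Real.exp_pos _
  have hI_nn : 0 ≤ ∫ s in Set.Ioi (0 : ℝ), θ s :=
    setIntegral_nonneg measurableSet_Ioi fun s hs => (hθ_mem s (le_of_lt hs)).1.le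
  have hΘ1 : Θ ≤ 1 := Real.exp_le_one_iff.2 (by linarith)
  -- M
  set M : ℝ := ∫ y, u₀ y with hMdef
  have hu_int : Integrable u₀ := hu₀_cont.integrable_of_hasCompactSupport hu₀_supp
  have hM : 0 < M := by
    rw [hMdef]
    rw [integral_pos_iff_support_of_nonneg hu_nn hu_int]
    obtain ⟨x₁, hx₁⟩ := hu₀_ne
    exact IsOpen.measure_pos volume (hu₀_cont.isOpen_support)
      ⟨x₁, hx₁⟩
  -- L
  obtain ⟨L₀, hL₀⟩ := (hu₀_supp.isBounded).subset_closedBall 0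
  set L : ℝ := max L₀ 1 with hLdef
  have hL1 : (1:ℝ) ≤ L := le_max_right _ _
  have hL : ∀ y, u₀ y ≠ 0 → |y| ≤ L := by
    intro y hy
    have : y ∈ Metric.closedBall (0:ℝ) L₀ := hL₀ (subset_tsupport u₀ hy)
    rw [Metric.mem_closedBall, Real.dist_eq, sub_zero] at this
    exact this.trans (le_max_left _ _)
  -- Cχ
  have hχc : HasCompactSupport χ := by
    refine HasCompactSupport.intro (isCompact_Icc (a := (-1:ℝ)) (b := 1)) fun x hx => ?_
    refine hχ_zero x ?_
    rw [Set.mem_Icc] at hx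
    push_neg at hx
    rcases le_or_gt (-1:ℝ) x with h | h
    · exact le_abs.2 (Or.inl (hx h).le)
    · exact le_abs.2 (Or.inr (by linarith))
  have hχd_cont : Continuous (deriv χ) := hχ_smooth.continuous_deriv (by simp)
  obtain ⟨z₀, hz₀⟩ := (hχd_cont.abs).exists_forall_ge_of_hasCompactSupport (hχc.deriv.abs)
  set Cχ : ℝ := max (|deriv χ z₀|) 1 with hCdef
  have hC1 : (1:ℝ) ≤ Cχ := le_max_right _ _
  have hCb : ∀ z, |deriv χ z| ≤ Cχ := fun z => (hz₀ z).trans (le_max_left _ _)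
  -- constants
  set B : ℝ := (Cχ + 1) * M with hBdef
  have hB : 0 < B := by positivity
  set δ : ℝ := Θ * M / 12 with hδdef
  have hδ : 0 < δ := by positivity
  set ε : ℝ := δ ^ 3 / (12 * M ^ 2) with hεdef
  have hε : 0 < ε := by positivity
  set T : ℝ := max (max 1 (L ^ 2)) (max ((2 * M) ^ 2) ((12 * B ^ 2 / δ ^ 3) ^ 2)) with hTdef
  have hT : 0 < T := lt_of_lt_of_le one_pos ((le_max_left 1 (L^2)).trans (le_max_left _ _))
  obtain ⟨t₀, ht₀T, hθsmall⟩ := exists_small_sqrt_theta θ hθ_int ε T hε hT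
  have ht1 : (1:ℝ) ≤ t₀ := le_trans ((le_max_left 1 (L^2)).trans (le_max_left _ _)) ht₀T
  have ht₀ : 0 < t₀ := lt_of_lt_of_le one_pos ht1
  set R : ℝ := Real.sqrt t₀ with hRdef
  have hR1 : (1:ℝ) ≤ R := by
    rw [hRdef, show (1:ℝ) = Real.sqrt 1 by simp]
    exact Real.sqrt_le_sqrt ht1
  have hR0 : 0 < R := lt_of_lt_of_le one_pos hR1
  have hRsq : R ^ 2 = t₀ := Real.sq_sqrt ht₀.le
  have hLR : L ≤ R := by
    rw [hRdef, show L = Real.sqrt (L ^ 2) by rw [Real.sqrt_sq (by linarith)]]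
    exact Real.sqrt_le_sqrt (le_trans ((le_max_right 1 (L^2)).trans (le_max_left _ _)) ht₀T)
  have hMR : 2 * M ≤ R := by
    have h2M : 0 ≤ 2 * M := by positivity
    rw [hRdef, show 2 * M = Real.sqrt ((2*M) ^ 2) by rw [Real.sqrt_sq h2M]]
    exact Real.sqrt_le_sqrt (le_trans ((le_max_left _ _).trans (le_max_right _ _)) ht₀T)
  have hBR : 12 * B ^ 2 / δ ^ 3 ≤ R := by
    have hq : 0 ≤ 12 * B ^ 2 / δ ^ 3 := by positivity
    rw [hRdef, show 12 * B ^ 2 / δ ^ 3 = Real.sqrt ((12 * B ^ 2 / δ ^ 3) ^ 2) by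
      rw [Real.sqrt_sq hq]]
    exact Real.sqrt_le_sqrt (le_trans ((le_max_right _ _).trans (le_max_right _ _)) ht₀T)
  -- theta at t₀
  obtain ⟨hθt0, hθt1⟩ := hθ_mem t₀ ht₀.le
  -- S bounds
  set S : ℝ := Real.sqrt (4 * Real.pi * t₀) with hSdef
  have hS0 : 0 < S := sqrtS_pos ht₀
  have hSR : R ≤ S := by
    rw [hSdef, hRdef]
    exact Real.sqrt_le_sqrt (by nlinarith only [Real.pi_gt_three, ht₀])
  have hS4R : S ≤ 4 * R := by
    rw [hSdef, hRdef, show (4:ℝ) * Real.pi * t₀ = (4 * Real.pi) * t₀ by ring]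
    rw [show (4:ℝ) * R = Real.sqrt 16 * R by
      rw [show (16:ℝ) = 4^2 by norm_num, Real.sqrt_sq (by norm_num)], hRdef,
      ← Real.sqrt_mul (by norm_num)]
    exact Real.sqrt_le_sqrt (by nlinarith only [Real.pi_le_four, ht₀])
  -- w facts
  set w : ℝ → ℝ := heatConv u₀ t₀ with hwdef
  have hw_nn : ∀ x, 0 ≤ w x := heatConv_nonneg hu₀_cont hu₀_supp hu_nn ht₀
  have hw_le : ∀ x, w x ≤ M / R := by
    intro x
    refine (heatConv_le hu₀_cont hu₀_supp hu_nn ht₀ x).trans ?_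
    rw [← hMdef, ← hSdef, div_eq_inv_mul]
    exact mul_le_mul_of_nonneg_right (by
      exact inv_anti₀ hR0 hSR) hM.le
  have hw_ge : ∀ x, |x| ≤ R → M / (12 * R) ≤ w x := by
    intro x hx
    refine le_trans ?_ (heatConv_ge hu₀_cont hu₀_supp hu_nn ht₀ hL hLR hx)
    rw [← hMdef, ← hSdef]
    have h3 : Real.exp 1 ≤ 3 := by linarith only [Real.exp_one_lt_d9]
    have he : (1:ℝ)/3 ≤ Real.exp (-1) := by
      rw [Real.exp_neg, one_div]
      exact inv_anti₀ (Real.exp_pos 1) h3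
    have h1 : (12 * R)⁻¹ ≤ S⁻¹ * Real.exp (-1) := by
      have h2 : S⁻¹ ≥ (4 * R)⁻¹ := inv_anti₀ (by positivity) hS4R
      calc (12 * R)⁻¹ = (4 * R)⁻¹ * (1/3) := by field_simp; ring
        _ ≤ S⁻¹ * Real.exp (-1) := mul_le_mul h2 he (by norm_num) (by positivity)
    calc M / (12 * R) = (12 * R)⁻¹ * M := by ring
      _ ≤ S⁻¹ * Real.exp (-1) * M := mul_le_mul_of_nonneg_right h1 hM.le
  -- v and its derivative
  set v : ℝ → ℝ := fun x => Θ * χ (x / R) * w x with hvdef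
  have hχdiff : Differentiable ℝ χ := hχ_smooth.differentiable (by simp)
  have hvd : ∀ x : ℝ, ∃ d : ℝ, HasDerivAt v d x ∧ |d| ≤ B / R ^ 2 := by
    intro x
    obtain ⟨dw, hdw, hdwb⟩ := heatConv_hasDerivAt hu₀_cont hu₀_supp hu_nn ht₀ x
    have hdwb' : |dw| ≤ M / R ^ 2 := by
      refine hdwb.trans ?_
      rw [← hMdef, ← hSdef]
      have h2t : (0:ℝ) < 2 * t₀ := by linarith
      have hs2 : 0 < Real.sqrt (2 * t₀) := Real.sqrt_pos.2 h2t
      have e1 : Real.sqrt (2 * t₀) / (2 * t₀) = (Real.sqrt (2 * t₀))⁻¹ := by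
        nth_rewrite 2 [← Real.mul_self_sqrt h2t.le]
        rw [div_mul_eq_div_div, div_self hs2.ne', one_div]
      have e2 : (Real.sqrt (2 * t₀))⁻¹ ≤ R⁻¹ := by
        refine inv_anti₀ hR0 ?_
        rw [hRdef]
        exact Real.sqrt_le_sqrt (by linarith)
      have e3 : S⁻¹ ≤ R⁻¹ := inv_anti₀ hR0 hSR
      calc S⁻¹ * Real.sqrt (2 * t₀) / (2 * t₀) * M
          = S⁻¹ * (Real.sqrt (2 * t₀) / (2 * t₀)) * M := by ring
        _ = S⁻¹ * (Real.sqrt (2 * t₀))⁻¹ * M := by rw [e1]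
        _ ≤ R⁻¹ * R⁻¹ * M := by
            refine mul_le_mul_of_nonneg_right ?_ hM.le
            exact mul_le_mul e3 e2 (by positivity) (by positivity)
        _ = M / R ^ 2 := by rw [pow_two, div_eq_mul_inv, mul_inv]; ring
    have hψ : HasDerivAt (fun x' => χ (x' / R)) (deriv χ (x / R) * (1 / R)) x := by
      have hd : HasDerivAt (fun x' : ℝ => x' / R) (1 / R) x := by
        simpa using (hasDerivAt_id x).div_const R
      exact (hχdiff.differentiableAt.hasDerivAt).comp x hd
    have hmul := (hψ.mul (hdw : HasDerivAt w dw x)).const_mul Θ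
    refine ⟨_, by
      have : v = fun x' => Θ * (χ (x' / R) * w x') := by
        funext x'; rw [hvdef]; ring
      rw [this]; exact hmul, ?_⟩
    have hb1 : |deriv χ (x / R) * (1 / R) * w x| ≤ Cχ * (1 / R) * (M / R) := by
      rw [abs_mul, abs_mul]
      have := hCb (x / R)
      refine mul_le_mul (mul_le_mul this (by rw [abs_of_pos (by positivity : (0:ℝ) < 1/R)]) (by positivity) (by linarith)) ?_ (abs_nonneg _) (by positivity)
      rw [abs_of_nonneg (hw_nn x)]
      exact hw_le x
    have hb2 : |χ (x / R) * dw| ≤ 1 * (M / R ^ 2) := by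
      rw [abs_mul]
      exact mul_le_mul (by
        rw [abs_of_nonneg (hχ_mem _).1]; exact (hχ_mem _).2) hdwb' (abs_nonneg _) (by norm_num)
    calc |Θ * (deriv χ (x / R) * (1 / R) * w x + χ (x / R) * dw)|
        ≤ 1 * |deriv χ (x / R) * (1 / R) * w x + χ (x / R) * dw| := by
          rw [abs_mul, abs_of_pos hΘ0]
          exact mul_le_mul_of_nonneg_right hΘ1 (abs_nonneg _)
      _ ≤ 1 * (|deriv χ (x / R) * (1 / R) * w x| + |χ (x / R) * dw|) := by
          rw [one_mul, one_mul]; exact abs_add_le _ _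
      _ ≤ Cχ * (1 / R) * (M / R) + 1 * (M / R ^ 2) := by
          rw [one_mul]; exact add_le_add hb1 hb2
      _ = (Cχ + 1) * M / R ^ 2 := by field_simp
      _ = B / R ^ 2 := by rw [hBdef]
  have hv_diff : Differentiable ℝ v := fun x => ((hvd x).choose_spec.1).differentiableAt
  have hv_cont : Continuous v := hv_diff.continuous
  have hv_nn : ∀ x, 0 ≤ v x := fun x =>
    mul_nonneg (mul_nonneg hΘ0.le (hχ_mem _).1) (hw_nn x)
  have hv_le : ∀ x, v x ≤ 1 / 2 := by
    intro x
    have h1 : v x ≤ w x := by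
      rw [hvdef]
      calc Θ * χ (x / R) * w x
          ≤ 1 * 1 * w x := by
            refine mul_le_mul (mul_le_mul hΘ1 (hχ_mem _).2 (hχ_mem _).1 (by norm_num))
              le_rfl (hw_nn x) (by norm_num)
        _ = w x := by ring
    have h2 : M / R ≤ 1 / 2 := by
      rw [div_le_div_iff₀ hR0 (by norm_num)]
      linarith
    exact h1.trans ((hw_le x).trans h2)
  refine ⟨t₀, ht₀, ?_, ?_⟩
  · -- vanishing outside
    intro x hx
    rw [Set.mem_Ioo, not_and_or] at hx
    push_neg at hx
    have hxR : R ≤ |x| := by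
      rcases hx with h | h
      · calc R ≤ -x := by linarith
          _ ≤ |x| := neg_le_abs x
      · exact h.trans (le_abs_self x)
    have hx1 : 1 ≤ |x / R| := by
      rw [abs_div, abs_of_pos hR0, le_div_iff₀ hR0, one_mul]
      exact hxR
    rw [hχ_zero _ hx1]
    ring
  · -- negative energy
    set θt : ℝ := θ t₀ with hθtdef
    have hIoo_lt : volume (Set.Ioo (-R) R) < ⊤ := by
      rw [Real.volume_Ioo]; exact ENNReal.ofReal_lt_top
    have hvol : (volume (Set.Ioo (-R) R)).toReal = 2 * R := by
      rw [Real.volume_Ioo, ENNReal.toReal_ofReal (by linarith)]; ring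
    have hv_leMR : ∀ x, v x ≤ M / R := by
      intro x
      have h1 : v x ≤ w x := by
        rw [hvdef]
        calc Θ * χ (x / R) * w x
            ≤ 1 * 1 * w x := by
              refine mul_le_mul (mul_le_mul hΘ1 (hχ_mem _).2 (hχ_mem _).1 (by norm_num))
                le_rfl (hw_nn x) (by norm_num)
          _ = w x := by ring
      exact h1.trans (hw_le x)
    -- gradient term
    have hb : ∀ x ∈ Set.Ioo (-R) R, ‖(deriv v x) ^ 2‖ ≤ (B / R ^ 2) ^ 2 := by
      intro x _
      obtain ⟨d, hd, hdb⟩ := hvd x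
      rw [hd.deriv, Real.norm_eq_abs, abs_pow]
      exact pow_le_pow_left₀ (abs_nonneg d) hdb 2
    have hm : AEStronglyMeasurable (fun x => (deriv v x) ^ 2)
        (volume.restrict (Set.Ioo (-R) R)) :=
      ((measurable_deriv v).pow_const 2).aestronglyMeasurable
    have hgrad : ∫ x in Set.Ioo (-R) R, (deriv v x) ^ 2 ≤ (B / R ^ 2) ^ 2 * (2 * R) := by
      have := norm_setIntegral_le_of_norm_le_const hIoo_lt hb
      rw [measureReal_def, hvol] at this
      calc ∫ x in Set.Ioo (-R) R, (deriv v x) ^ 2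
          ≤ ‖∫ x in Set.Ioo (-R) R, (deriv v x) ^ 2‖ := le_abs_self _
        _ ≤ (B / R ^ 2) ^ 2 * (2 * R) := this
    have hgrad_int : IntegrableOn (fun x => (deriv v x) ^ 2) (Set.Ioo (-R) R) := by
      refine Integrable.mono' (integrableOn_const (C := (B / R ^ 2) ^ 2) hIoo_lt.ne) hm ?_
      filter_upwards [MeasureTheory.ae_restrict_mem measurableSet_Ioo] with x hx
      exact hb x hx
    -- potential term
    set g : ℝ → ℝ := fun x => Fpot θt (v x) + θt * (v x) ^ 2 / 2 with hgdef
    set h : ℝ → ℝ := fun x => θt * (v x) ^ 2 / 2 with hhdef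
    have hg_cont : Continuous g := by
      rw [hgdef]; unfold Fpot; fun_prop
    have hh_cont : Continuous h := by
      rw [hhdef]; fun_prop
    have hg_int : IntegrableOn g (Set.Ioo (-R) R) :=
      (hg_cont.integrableOn_Icc (a := -R) (b := R)).mono_set Set.Ioo_subset_Icc_self
    have hg_int2 : IntegrableOn g (Set.Ioo (-(R/2)) (R/2)) :=
      hg_int.mono_set (Set.Ioo_subset_Ioo (by linarith) (by linarith))
    have hh_int : IntegrableOn h (Set.Ioo (-R) R) :=
      (hh_cont.integrableOn_Icc (a := -R) (b := R)).mono_set Set.Ioo_subset_Icc_self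
    have hsplit : ∫ x in Set.Ioo (-R) R, Fpot θt (v x)
        = (∫ x in Set.Ioo (-R) R, g x) - ∫ x in Set.Ioo (-R) R, h x := by
      rw [← integral_sub hg_int hh_int]
      congr 1
      funext x
      rw [hgdef, hhdef]
      ring
    have hg_nn : ∀ x, 0 ≤ g x := by
      intro x
      have h1 := hv_nn x
      have h2 := hv_le x
      have h3 : 0 ≤ θt * (v x) ^ 3 := mul_nonneg hθt0.le (pow_nonneg h1 3)
      have h4 : 0 ≤ (v x) ^ 3 * (1 / 2 - v x) :=
        mul_nonneg (pow_nonneg h1 3) (by linarith)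
      rw [hgdef]
      unfold Fpot
      nlinarith only [h3, h4, pow_nonneg h1 3]
    have hmono : ∫ x in Set.Ioo (-(R/2)) (R/2), g x ≤ ∫ x in Set.Ioo (-R) R, g x := by
      refine setIntegral_mono_set hg_int ?_ ?_
      · exact Filter.Eventually.of_forall (fun x => hg_nn x)
      · exact (Set.Ioo_subset_Ioo (by linarith) (by linarith)).eventuallyLE
    have hinner : ∀ x ∈ Set.Ioo (-(R/2)) (R/2), (δ / R) ^ 3 / 6 ≤ g x := by
      intro x hx
      rw [Set.mem_Ioo] at hx
      have hxa : |x| ≤ R := abs_le.2 ⟨by linarith [hx.1], by linarith [hx.2]⟩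
      have hchi : χ (x / R) = 1 := by
        refine hχ_one _ ?_
        rw [abs_div, abs_of_pos hR0, div_le_iff₀ hR0]
        have : |x| ≤ R / 2 := abs_le.2 ⟨by linarith [hx.1], by linarith [hx.2]⟩
        linarith
      have hvx : δ / R ≤ v x := by
        rw [hvdef]
        simp only [hchi]
        have := hw_ge x hxa
        calc δ / R = Θ * (M / (12 * R)) := by rw [hδdef]; field_simp; try ring
          _ ≤ Θ * w x := mul_le_mul_of_nonneg_left this hΘ0.le
          _ = Θ * 1 * w x := by ring
      have h2 := hv_le x
      have h1 := hv_nn x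
      have hcube : (δ / R) ^ 3 ≤ (v x) ^ 3 := pow_le_pow_left₀ (by positivity) hvx 3
      have h4 : 0 ≤ (v x) ^ 3 * (1 / 2 - v x) :=
        mul_nonneg (pow_nonneg h1 3) (by linarith)
      have h3 : 0 ≤ θt * (v x) ^ 3 := mul_nonneg hθt0.le (pow_nonneg h1 3)
      rw [hgdef]
      unfold Fpot
      nlinarith only [hcube, h3, h4]
    have hlow : (δ / R) ^ 3 / 6 * R ≤ ∫ x in Set.Ioo (-(R/2)) (R/2), g x := by
      have hconst : IntegrableOn (fun _ : ℝ => (δ / R) ^ 3 / 6) (Set.Ioo (-(R/2)) (R/2)) := by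
        refine integrableOn_const (ne_of_lt ?_)
        rw [Real.volume_Ioo]; exact ENNReal.ofReal_lt_top
      have := setIntegral_mono_on hconst hg_int2 measurableSet_Ioo hinner
      rwa [setIntegral_const, measureReal_def, Real.volume_Ioo,
        show R / 2 - -(R/2) = R by ring, ENNReal.toReal_ofReal hR0.le,
        smul_eq_mul, mul_comm] at this
    have hhub : ∫ x in Set.Ioo (-R) R, h x ≤ θt * (M / R) ^ 2 / 2 * (2 * R) := by
      have hb : ∀ x ∈ Set.Ioo (-R) R, ‖h x‖ ≤ θt * (M / R) ^ 2 / 2 := by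
        intro x _
        rw [hhdef, Real.norm_eq_abs, abs_of_nonneg (by positivity)]
        have h1 : (v x) ^ 2 ≤ (M / R) ^ 2 := pow_le_pow_left₀ (hv_nn x) (hv_leMR x) 2
        linarith only [mul_le_mul_of_nonneg_left h1 hθt0.le]
      have := norm_setIntegral_le_of_norm_le_const hIoo_lt hb
      rw [measureReal_def, hvol] at this
      calc ∫ x in Set.Ioo (-R) R, h x ≤ ‖∫ x in Set.Ioo (-R) R, h x‖ := le_abs_self _
        _ ≤ θt * (M / R) ^ 2 / 2 * (2 * R) := this
    -- combine
    have hp1 : 12 * B ^ 2 ≤ δ ^ 3 * R := by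
      rw [div_le_iff₀ (by positivity)] at hBR
      linarith only [hBR]
    have hp2 : 12 * M ^ 2 * (R * θt) < δ ^ 3 := by
      rw [hεdef, lt_div_iff₀ (by positivity)] at hθsmall
      linarith only [hθsmall]
    have e2 : (δ / R) ^ 3 / 6 * R = δ ^ 3 / (6 * R ^ 2) := by
      field_simp
    have e3 : θt * (M / R) ^ 2 / 2 * (2 * R) = θt * M ^ 2 / R := by
      field_simp
    show energy R θt v < 0
    rw [energy]
    set C : ℝ := ∫ x in Set.Ioo (-R) R, Fpot θt (v x) with hCdef2
    have hsplit2 : (∫ x in Set.Ioo (-R) R, ((deriv v x) ^ 2 - C))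
        = (∫ x in Set.Ioo (-R) R, (deriv v x) ^ 2) - 2 * R * C := by
      rw [integral_sub hgrad_int (integrableOn_const hIoo_lt.ne)]
      rw [setIntegral_const, measureReal_def, hvol, smul_eq_mul]
    have CLow : δ ^ 3 / (6 * R ^ 2) - θt * M ^ 2 / R ≤ C := by
      have l1 := hlow.trans hmono
      rw [e2] at l1
      have l2 := hhub
      rw [e3] at l2
      rw [hsplit]
      linarith only [l1, l2]
    have hR23 : R ^ 2 ≤ R ^ 3 := by nlinarith only [hR1, sq_nonneg R]
    have d1 : B ^ 2 / R ^ 3 ≤ δ ^ 3 / (12 * R) := by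
      rw [div_le_div_iff₀ (by positivity) (by positivity)]
      have k1 := mul_le_mul_of_nonneg_right hp1 hR0.le
      have k2 := mul_le_mul_of_nonneg_left hR23 (by positivity : (0:ℝ) ≤ δ ^ 3)
      nlinarith only [k1, k2]
    have d2 : θt * M ^ 2 < δ ^ 3 / (12 * R) := by
      rw [lt_div_iff₀ (by positivity)]
      nlinarith only [hp2]
    have key : (B / R ^ 2) ^ 2 * (2 * R) - 2 * R * (δ ^ 3 / (6 * R ^ 2) - θt * M ^ 2 / R) < 0 := by
      have e1 : (B / R ^ 2) ^ 2 * (2 * R) = 2 * (B ^ 2 / R ^ 3) := by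
        field_simp
      have e4 : 2 * R * (δ ^ 3 / (6 * R ^ 2) - θt * M ^ 2 / R)
          = δ ^ 3 / (3 * R) - 2 * (θt * M ^ 2) := by
        field_simp; ring
      have e5 : δ ^ 3 / (3 * R) = 4 * (δ ^ 3 / (12 * R)) := by
        field_simp; ring
      rw [e1, e4, e5]
      linarith only [d1, d2]
    have hX : (∫ x in Set.Ioo (-R) R, (deriv v x) ^ 2) - 2 * R * C
        ≤ (B / R ^ 2) ^ 2 * (2 * R) - 2 * R * (δ ^ 3 / (6 * R ^ 2) - θt * M ^ 2 / R) := by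
      have h6 : 2 * R * (δ ^ 3 / (6 * R ^ 2) - θt * M ^ 2 / R) ≤ 2 * R * C :=
        mul_le_mul_of_nonneg_left CLow (by positivity)
      linarith only [hgrad, h6]
    rw [hsplit2]
    linarith only [hX, key]
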